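/- For all real x with 0 < |x| < π/2, one has x/sin x + ((x/2)/tan(x/2))² < 2 + ((π² + 8π − 32)/(2π³))·x³·sin x. -/

import Mathlib

/-!
Since `(x / 2) / tan (x / 2) = x (1 + cos x) / (2 sin x)`, clearing denominators turns the
inequality into positivity on `(0, π / 2)` of the even function
`wilkerGap K x = 8 sin² x + 4 K x³ sin³ x - 4 x sin x - x² (1 + cos x)²`, and the constant
`K = (π² + 8π - 32) / (2π³)` is precisely the one with `wilkerGap K (π / 2) = 0`.
On `(0, 3 / 2]` the alternating Taylor bounds for `sin` and `cos` reduce `wilkerGap K x > 0` to a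
polynomial inequality. On `[3 / 2, π / 2]` the same bounds show that `wilkerGap K` is strictly
decreasing, so it stays above its value `0` at `π / 2`.
-/

open Real Set
open scoped Nat

/-- `sinTaylor n` and `cosTaylor n` are the sums of the first `n` nonzero terms of the
Maclaurin series, of degrees `2 n - 1` and `2 n - 2`. -/
noncomputable def sinTaylor (n : ℕ) (x : ℝ) : ℝ :=
  ∑ k ∈ Finset.range n, (-1) ^ k * x ^ (2 * k + 1) / (2 * k + 1)!

noncomputable def cosTaylor (n : ℕ) (x : ℝ) : ℝ :=
  ∑ k ∈ Finset.range n, (-1) ^ k * x ^ (2 * k) / (2 * k)!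

lemma hasDerivAt_sinTaylor (n : ℕ) (x : ℝ) : HasDerivAt (sinTaylor n) (cosTaylor n x) x := by
  refine HasDerivAt.fun_sum fun k _ =>
    (((hasDerivAt_pow (2 * k + 1) x).const_mul ((-1) ^ k)).div_const _).congr_deriv ?_
  rw [Nat.factorial_succ]
  push_cast
  field_simp

lemma hasDerivAt_cosTaylor (n : ℕ) (x : ℝ) :
    HasDerivAt (cosTaylor (n + 1)) (-sinTaylor n x) x := by
  have hsplit : cosTaylor (n + 1) = fun y : ℝ =>
      ∑ k ∈ Finset.range n, (-1) ^ (k + 1) * y ^ (2 * (k + 1)) / (2 * (k + 1))! + 1 := by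
    funext y
    simp [cosTaylor, Finset.sum_range_succ']
  rw [hsplit, sinTaylor, ← Finset.sum_neg_distrib]
  refine (HasDerivAt.fun_sum fun k _ =>
    (((hasDerivAt_pow (2 * (k + 1)) x).const_mul ((-1) ^ (k + 1))).div_const _).congr_deriv
      ?_).add_const 1
  rw [show 2 * (k + 1) = 2 * k + 1 + 1 by ring, Nat.factorial_succ]
  push_cast
  field_simp
  ring

lemma nonneg_of_hasDerivAt_nonneg {f f' : ℝ → ℝ} (hf : ∀ t, HasDerivAt f (f' t) t)
    (hf0 : f 0 = 0) (hf' : ∀ t, 0 ≤ t → 0 ≤ f' t) {x : ℝ} (hx : 0 ≤ x) : 0 ≤ f x := by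
  have hmono : MonotoneOn f (Ici 0) :=
    monotoneOn_of_hasDerivWithinAt_nonneg (convex_Ici 0)
      (fun t _ => (hf t).continuousAt.continuousWithinAt)
      (fun t _ => (hf t).hasDerivWithinAt)
      (fun t ht => hf' t (interior_subset ht))
  exact hf0 ▸ hmono self_mem_Ici hx hx

lemma sinTaylor_alternating_of_cosTaylor {n : ℕ}
    (hcos : ∀ y, 0 ≤ y → 0 ≤ (-1) ^ n * (cosTaylor (n + 1) y - cos y))
    {x : ℝ} (hx : 0 ≤ x) :
    0 ≤ (-1) ^ n * (sinTaylor (n + 1) x - sin x) :=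
  nonneg_of_hasDerivAt_nonneg
    (fun t => ((hasDerivAt_sinTaylor (n + 1) t).sub (hasDerivAt_sin t)).const_mul _)
    (by simp [sinTaylor]) hcos hx

theorem cosTaylor_alternating (n : ℕ) {x : ℝ} (hx : 0 ≤ x) :
    0 ≤ (-1) ^ n * (cosTaylor (n + 1) x - cos x) := by
  induction n generalizing x with
  | zero => simpa [cosTaylor] using cos_le_one x
  | succ m ih =>
    exact nonneg_of_hasDerivAt_nonneg
      (fun t => ((hasDerivAt_cosTaylor (m + 1) t).sub (hasDerivAt_cos t)).const_mul _)
      (by simp [cosTaylor, Finset.sum_range_succ'])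
      (fun t ht => by
        have := sinTaylor_alternating_of_cosTaylor (fun _ => ih) ht
        rw [pow_succ]
        linarith) hx

theorem sinTaylor_alternating (n : ℕ) {x : ℝ} (hx : 0 ≤ x) :
    0 ≤ (-1) ^ n * (sinTaylor (n + 1) x - sin x) :=
  sinTaylor_alternating_of_cosTaylor (fun _ hy => cosTaylor_alternating n hy) hx

lemma sinTaylor_le_sin {n : ℕ} (hn : Odd n) {x : ℝ} (hx : 0 ≤ x) :
    sinTaylor (n + 1) x ≤ sin x := by
  have := sinTaylor_alternating n hx
  rw [hn.neg_one_pow] at this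
  linarith

lemma sin_le_sinTaylor {n : ℕ} (hn : Even n) {x : ℝ} (hx : 0 ≤ x) :
    sin x ≤ sinTaylor (n + 1) x := by
  have := sinTaylor_alternating n hx
  rw [hn.neg_one_pow] at this
  linarith

lemma cos_le_cosTaylor {n : ℕ} (hn : Even n) {x : ℝ} (hx : 0 ≤ x) :
    cos x ≤ cosTaylor (n + 1) x := by
  have := cosTaylor_alternating n hx
  rw [hn.neg_one_pow] at this
  linarith

/- The polynomial inequalities below are certified by `linarith` as positive combinations of the
Bernstein basis `(t - a) ^ j * (b - t) ^ k` of the interval: all Bernstein coefficients of these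
polynomials have the required sign. -/
lemma sub_pow_mul_sub_pow_nonneg {a b t : ℝ} (ha : a ≤ t) (hb : t ≤ b) (j k : ℕ) :
    0 ≤ (t - a) ^ j * (b - t) ^ k :=
  mul_nonneg (pow_nonneg (sub_nonneg.2 ha) j) (pow_nonneg (sub_nonneg.2 hb) k)

lemma sinTaylor_four_nonneg {x : ℝ} (hx0 : 0 ≤ x) (hx : x ≤ 3 / 2) : 0 ≤ sinTaylor 4 x := by
  have B := sub_pow_mul_sub_pow_nonneg hx0 hx
  simp only [sinTaylor, Finset.sum_range_succ, Finset.sum_range_zero]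
  norm_num [Nat.factorial]
  linarith [B 1 6, B 2 5, B 3 4, B 4 3, B 5 2, B 6 1, B 7 0]

noncomputable def wilkerGap (K x : ℝ) : ℝ :=
  8 * sin x ^ 2 + 4 * K * x ^ 3 * sin x ^ 3 - 4 * x * sin x - x ^ 2 * (1 + cos x) ^ 2

lemma wilkerGap_neg (K x : ℝ) : wilkerGap K (-x) = wilkerGap K x := by
  simp only [wilkerGap, sin_neg, cos_neg]
  ring

lemma wilkerGap_abs (K x : ℝ) : wilkerGap K |x| = wilkerGap K x := by
  rcases abs_choice x with h | h <;> simp only [h, wilkerGap_neg]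

lemma sub_wilker_eq_wilkerGap_div (K : ℝ) {x : ℝ} (hx : sin x ≠ 0) :
    2 + K * x ^ 3 * sin x - (x / sin x + ((x / 2) / tan (x / 2)) ^ 2) =
      wilkerGap K x / (4 * sin x ^ 2) := by
  have hsin : sin x = 2 * sin (x / 2) * cos (x / 2) := by
    rw [← sin_two_mul, mul_div_cancel₀ x two_ne_zero]
  have hcos : cos x = 2 * cos (x / 2) ^ 2 - 1 := by
    rw [← cos_two_mul, mul_div_cancel₀ x two_ne_zero]
  have hs : sin (x / 2) ≠ 0 := fun h => hx (by rw [hsin, h]; ring)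
  have hc : cos (x / 2) ≠ 0 := fun h => hx (by rw [hsin, h]; ring)
  rw [wilkerGap, tan_eq_sin_div_cos, hcos, hsin]
  field_simp
  ring

lemma wilkerGap_taylorBound_pos {x : ℝ} (hx0 : 0 < x) (hx : x ≤ 3 / 2) :
    0 < 8 * sinTaylor 4 x ^ 2 + 4 * (6 / 125) * x ^ 3 * sinTaylor 4 x ^ 3
      - 4 * x * sinTaylor 3 x - x ^ 2 * (1 + cosTaylor 5 x) ^ 2 := by
  -- The bound vanishes to order six at `0`: certify it in `y = x ^ 2 ∈ [0, 9 / 4]`, times `x⁶`.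
  have hx6 : 0 < x ^ 6 := by positivity
  have B := fun j k => mul_nonneg hx6.le
    (sub_pow_mul_sub_pow_nonneg (sq_nonneg x) (by nlinarith : x ^ 2 ≤ 9 / 4) j k)
  simp only [sinTaylor, cosTaylor, Finset.sum_range_succ, Finset.sum_range_zero]
  norm_num [Nat.factorial]
  linarith [B 0 9, B 1 8, B 2 7, B 3 6, B 4 5, B 5 4, B 6 3, B 7 2, B 8 1, B 9 0]

lemma wilkerGap_pos_of_le_three_halves {K x : ℝ} (hK : 6 / 125 ≤ K) (hx0 : 0 < x)
    (hx : x ≤ 3 / 2) : 0 < wilkerGap K x := by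
  have hsl : sinTaylor 4 x ≤ sin x := sinTaylor_le_sin (by decide) hx0.le
  have hsu : sin x ≤ sinTaylor 3 x := sin_le_sinTaylor (by decide) hx0.le
  have hcu : cos x ≤ cosTaylor 5 x := cos_le_cosTaylor (by decide) hx0.le
  have hsl0 := sinTaylor_four_nonneg hx0.le hx
  have hsq : sinTaylor 4 x ^ 2 ≤ sin x ^ 2 := pow_le_pow_left₀ hsl0 hsl 2
  have hcube : 6 / 125 * (x ^ 3 * sinTaylor 4 x ^ 3) ≤ K * (x ^ 3 * sin x ^ 3) :=
    mul_le_mul hK (mul_le_mul_of_nonneg_left (pow_le_pow_left₀ hsl0 hsl 3) (by positivity))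
      (by positivity) (by linarith)
  have hlin : x * sin x ≤ x * sinTaylor 3 x := mul_le_mul_of_nonneg_left hsu hx0.le
  have hcos : x ^ 2 * (1 + cos x) ^ 2 ≤ x ^ 2 * (1 + cosTaylor 5 x) ^ 2 :=
    mul_le_mul_of_nonneg_left
      (pow_le_pow_left₀ (by linarith [neg_one_le_cos x]) (by linarith) 2) (sq_nonneg x)
  have := wilkerGap_taylorBound_pos hx0 hx
  rw [wilkerGap]
  linarith

lemma wilkerGapDeriv_taylorBound_neg {t : ℝ} (ht0 : 3 / 2 ≤ t) (ht : t ≤ 8 / 5) :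
    3 / 5 * t ^ 2 - 4 * sinTaylor 4 t - 2 * t + 2 * t ^ 2
      + (16 + 3 / 5 * t ^ 3 - 8 * t + 2 * t ^ 2) * cosTaylor 5 t < 0 := by
  have B := sub_pow_mul_sub_pow_nonneg ht0 ht
  simp only [sinTaylor, cosTaylor, Finset.sum_range_succ, Finset.sum_range_zero]
  norm_num [Nat.factorial]
  linarith [B 0 11, B 1 10, B 2 9, B 3 8, B 4 7, B 5 6, B 6 5, B 7 4, B 8 3, B 9 2, B 10 1,
    B 11 0]

noncomputable def wilkerGapDeriv (K t : ℝ) : ℝ :=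
  16 * sin t * cos t + 12 * K * t ^ 2 * sin t ^ 3 + 12 * K * t ^ 3 * sin t ^ 2 * cos t
    - 4 * sin t - 4 * t * cos t - 2 * t * (1 + cos t) ^ 2 + 2 * t ^ 2 * (1 + cos t) * sin t

lemma hasDerivAt_wilkerGap (K t : ℝ) : HasDerivAt (wilkerGap K) (wilkerGapDeriv K t) t := by
  have hs := hasDerivAt_sin t
  have hc := hasDerivAt_cos t
  have hid := hasDerivAt_id' t
  refine (((((hs.fun_pow 2).const_mul 8).fun_add
    (((hid.fun_pow 3).const_mul (4 * K)).fun_mul (hs.fun_pow 3))).fun_sub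
    ((hid.const_mul 4).fun_mul hs)).fun_sub
    ((hid.fun_pow 2).fun_mul ((hc.const_add 1).fun_pow 2))).congr_deriv ?_
  simp only [wilkerGapDeriv]
  push_cast
  ring

lemma wilkerGapDeriv_neg {K t : ℝ} (hK0 : 0 ≤ K) (hK : K ≤ 1 / 20) (ht0 : 3 / 2 ≤ t)
    (ht1 : t ≤ π / 2) : wilkerGapDeriv K t < 0 := by
  have ht : 0 ≤ t := by linarith
  have hs0 : 0 ≤ sin t := sin_nonneg_of_nonneg_of_le_pi ht (by linarith [pi_pos])
  have hc0 : 0 ≤ cos t := cos_nonneg_of_mem_Icc ⟨by linarith [pi_pos], ht1⟩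
  -- Near `π / 2` we have `sin t ≈ 1`: replacing `sin t` by `1` wherever its coefficient is
  -- nonnegative costs little, and leaves `sin t` and `cos t` only linearly.
  have hbound : wilkerGapDeriv K t ≤ 12 * K * t ^ 2 - 4 * sin t - 2 * t + 2 * t ^ 2
      + (16 + 12 * K * t ^ 3 - 8 * t + 2 * t ^ 2) * cos t := by
    have h1 : 0 ≤ 1 - sin t := sub_nonneg.2 (sin_le_one t)
    have h2 : 0 ≤ 1 - sin t ^ 2 := sub_nonneg.2 (pow_le_one₀ hs0 (sin_le_one t))
    have h3 : 0 ≤ 1 - sin t ^ 3 := sub_nonneg.2 (pow_le_one₀ hs0 (sin_le_one t))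
    rw [wilkerGapDeriv]
    linarith [mul_nonneg hc0 h1, mul_nonneg (by positivity : 0 ≤ K * t ^ 2) h3,
      mul_nonneg (by positivity : 0 ≤ K * t ^ 3 * cos t) h2,
      mul_nonneg (mul_nonneg (sq_nonneg t) (by linarith : 0 ≤ 1 + cos t)) h1,
      mul_nonneg ht (sq_nonneg (cos t))]
  have hsl : sinTaylor 4 t ≤ sin t := sinTaylor_le_sin (by decide) ht
  have hcu : cos t ≤ cosTaylor 5 t := cos_le_cosTaylor (by decide) ht
  have ht3 : 0 ≤ t ^ 3 := pow_nonneg ht 3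
  have hK2 : 12 * K * t ^ 2 ≤ 3 / 5 * t ^ 2 := by nlinarith [sq_nonneg t]
  have hKc : (16 + 12 * K * t ^ 3 - 8 * t + 2 * t ^ 2) * cos t ≤
      (16 + 3 / 5 * t ^ 3 - 8 * t + 2 * t ^ 2) * cosTaylor 5 t :=
    mul_le_mul (by nlinarith) hcu hc0 (by nlinarith [sq_nonneg (t - 2)])
  linarith [wilkerGapDeriv_taylorBound_neg ht0 (by linarith [pi_lt_d2])]

lemma strictAntiOn_wilkerGap {K : ℝ} (hK0 : 0 ≤ K) (hK : K ≤ 1 / 20) :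
    StrictAntiOn (wilkerGap K) (Icc (3 / 2) (π / 2)) :=
  strictAntiOn_of_hasDerivWithinAt_neg (convex_Icc _ _)
    (fun t _ => (hasDerivAt_wilkerGap K t).continuousAt.continuousWithinAt)
    (fun t _ => (hasDerivAt_wilkerGap K t).hasDerivWithinAt)
    (fun t ht => by
      rw [interior_Icc] at ht
      exact wilkerGapDeriv_neg hK0 hK ht.1.le ht.2.le)

noncomputable def wilkerConst : ℝ := (π ^ 2 + 8 * π - 32) / (2 * π ^ 3)

lemma wilkerConst_mem_Icc : wilkerConst ∈ Icc (6 / 125) (1 / 20) := by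
  have hpi3 : 0 < 2 * π ^ 3 := by positivity
  have h1 := pi_gt_d4
  have h2 := pi_lt_d2
  constructor
  · rw [wilkerConst, le_div_iff₀ hpi3]
    nlinarith [mul_pos (sub_pos.2 h1) (sub_pos.2 h2), sq_nonneg (π - 3)]
  · rw [wilkerConst, div_le_iff₀ hpi3]
    nlinarith [mul_pos (sub_pos.2 h1) (sub_pos.2 h2), sq_nonneg (π - 3)]

lemma wilkerGap_wilkerConst_pi_div_two : wilkerGap wilkerConst (π / 2) = 0 := by
  rw [wilkerGap, wilkerConst, sin_pi_div_two, cos_pi_div_two]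
  field_simp
  ring

lemma wilkerGap_pos {x : ℝ} (hx0 : 0 < x) (hx : x < π / 2) : 0 < wilkerGap wilkerConst x := by
  obtain ⟨hKlo, hKhi⟩ := wilkerConst_mem_Icc
  rcases le_or_gt x (3 / 2) with hx1 | hx1
  · exact wilkerGap_pos_of_le_three_halves hKlo hx0 hx1
  · have h32 : 3 / 2 ≤ π / 2 := by linarith [pi_gt_three]
    rw [← wilkerGap_wilkerConst_pi_div_two]
    exact strictAntiOn_wilkerGap (by linarith) hKhi ⟨hx1.le, hx.le⟩ ⟨h32, le_rfl⟩ hx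

theorem wilker_upper (x : ℝ) (h1 : 0 < |x|) (h2 : |x| < π / 2) :
    x / Real.sin x + ((x / 2) / Real.tan (x / 2)) ^ 2 <
      2 + ((π ^ 2 + 8 * π - 32) / (2 * π ^ 3)) * x ^ 3 * Real.sin x := by
  have hsin : sin x ≠ 0 := by
    rw [Ne, sin_eq_zero_iff_of_lt_of_lt (by linarith [neg_abs_le x, pi_pos])
      (by linarith [le_abs_self x, pi_pos])]
    exact abs_pos.1 h1
  have hgap : 0 < wilkerGap wilkerConst x := wilkerGap_abs wilkerConst x ▸ wilkerGap_pos h1 h2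
  have hdiv : 0 < wilkerGap wilkerConst x / (4 * sin x ^ 2) := div_pos hgap (by positivity)
  have := sub_wilker_eq_wilkerGap_div wilkerConst hsin
  rw [wilkerConst] at this hdiv
  linarith
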